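/- arXiv:2406.08209 — 6 statements merged into one kernel-verified Lean document; each statement's English description precedes it below -/
import Mathlib

section
/- Let h > 0 and let T : ℝ → ℝ be given by T(x) = x - h·x³. Then the pushforward measure T_♯γ of the standard Gaussian measure γ on ℝ under T admits no continuous Lebesgue density: there is no continuous function f : ℝ → ℝ such that Measure.map T γ equals the Lebesgue measure with density x ↦ ENNReal.ofReal (f x). -/
/-!
At the critical point `x₀ = (3h)^{-1/2}` of `T x = x - h x³` the map is flat to second order,
`T x - T x₀ = -h (x - x₀)² (x + 2x₀)`, so the whole interval `[x₀ - δ, x₀ + δ]`, of Gaussian mass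
`≍ δ`, is sent into an interval of length `≍ δ²` around `T x₀`. A density bounded near `T x₀`
gives that interval mass `O(δ²)`, which is impossible as `δ → 0`.
-/

open MeasureTheory ProbabilityTheory Filter Topology Asymptotics Metric

section DensityBounds

variable {α : Type*} [MeasurableSpace α] {μ : Measure α} {g : α → ℝ} {s : Set α}

lemma ofReal_mul_le_withDensity_ofReal (hs : MeasurableSet s) {m : ℝ} (hm : ∀ x ∈ s, m ≤ g x) :
    ENNReal.ofReal m * μ s ≤ μ.withDensity (fun x => ENNReal.ofReal (g x)) s := by
  rw [withDensity_apply _ hs, ← setLIntegral_const]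
  exact setLIntegral_mono' hs fun x hx => ENNReal.ofReal_le_ofReal (hm x hx)

lemma withDensity_ofReal_le_ofReal_mul (hs : MeasurableSet s) {B : ℝ} (hB : ∀ x ∈ s, g x ≤ B) :
    μ.withDensity (fun x => ENNReal.ofReal (g x)) s ≤ ENNReal.ofReal B * μ s := by
  rw [withDensity_apply _ hs, ← setLIntegral_const]
  exact setLIntegral_mono' hs fun x hx => ENNReal.ofReal_le_ofReal (hB x hx)

end DensityBounds

lemma continuous_gaussianPDFReal (m : ℝ) (v : NNReal) : Continuous (gaussianPDFReal m v) := by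
  unfold gaussianPDFReal
  fun_prop

lemma isBigO_sub_mul_pow_three_of_critical {h x₀ : ℝ} (hx₀ : 3 * h * x₀ ^ 2 = 1) :
    (fun x : ℝ => (x - h * x ^ 3) - (x₀ - h * x₀ ^ 3)) =O[𝓝 x₀] fun x => (x - x₀) ^ 2 := by
  have hfactor : (fun x : ℝ => (x - h * x ^ 3) - (x₀ - h * x₀ ^ 3)) =
      fun x => (x - x₀) ^ 2 * (-h * (x + 2 * x₀)) := by
    funext x
    linear_combination (x₀ - x) * hx₀
  rw [hfactor]
  simpa using (isBigO_refl (fun x : ℝ => (x - x₀) ^ 2) (𝓝 x₀)).mul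
    (Tendsto.isBigO_one ℝ ((continuous_const.mul (continuous_id.add continuous_const)).tendsto x₀))

lemma mapsTo_closedBall_of_dist_le_mul_sq {X Y : Type*} [PseudoMetricSpace X]
    [PseudoMetricSpace Y] {T : X → Y} {x₀ : X} {K δ : ℝ} (hK : 0 ≤ K)
    (hT : ∀ x ∈ closedBall x₀ δ, dist (T x) (T x₀) ≤ K * dist x x₀ ^ 2) :
    Set.MapsTo T (closedBall x₀ δ) (closedBall (T x₀) (K * δ ^ 2)) := fun x hx =>
  (hT x hx).trans <| mul_le_mul_of_nonneg_left (pow_le_pow_left₀ dist_nonneg hx 2) hK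

lemma map_withDensity_ne_withDensity_of_isBigO_sq {g T f : ℝ → ℝ} {x₀ : ℝ}
    (hg : ContinuousAt g x₀) (hg₀ : 0 < g x₀) (hT : Measurable T)
    (hT₀ : (fun x => T x - T x₀) =O[𝓝 x₀] fun x => (x - x₀) ^ 2) (hf : ContinuousAt f (T x₀)) :
    (volume.withDensity fun x => ENNReal.ofReal (g x)).map T ≠
      volume.withDensity fun x => ENNReal.ofReal (f x) := by
  intro hmap
  set B := |f (T x₀)| + 1
  obtain ⟨K, hK, hTK⟩ := hT₀.exists_nonneg
  obtain ⟨r, hr, hx₀near⟩ := eventually_nhds_iff_ball.1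
    ((continuousAt_const.eventually_lt hg (half_lt_self hg₀)).and hTK.bound)
  obtain ⟨ρ, hρ, hcnear⟩ := eventually_nhds_iff_ball.1
    (hf.eventually_lt continuousAt_const (lt_add_one (f (T x₀))))
  have hsmall : ∀ᶠ δ in 𝓝 (0 : ℝ), δ < r ∧ K * δ ^ 2 < ρ ∧ B * K * δ < g x₀ / 2 :=
    (eventually_lt_nhds hr).and <|
      ((continuous_const.mul (continuous_pow 2)).continuousAt.eventually_lt continuousAt_const
        (by simpa using hρ)).and
      ((continuous_const.mul continuous_id).continuousAt.eventually_lt continuousAt_const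
        (by simpa using half_pos hg₀))
  obtain ⟨δ, hδ, hδr, hδρ, hδm⟩ :=
    (eventually_mem_nhdsWithin.and (hsmall.filter_mono nhdsWithin_le_nhds)).exists (f := 𝓝[>] 0)
  have hmaps := mapsTo_closedBall_of_dist_le_mul_sq (T := T) hK fun x hx => by
    simpa [dist_eq_norm] using (hx₀near x (closedBall_subset_ball hδr hx)).2
  have hmass : ENNReal.ofReal (g x₀ / 2) * ENNReal.ofReal (2 * δ) ≤
      ENNReal.ofReal B * ENNReal.ofReal (2 * (K * δ ^ 2)) := by
    calc ENNReal.ofReal (g x₀ / 2) * ENNReal.ofReal (2 * δ)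
        ≤ (volume.withDensity fun x => ENNReal.ofReal (g x)) (closedBall x₀ δ) := by
          rw [← Real.volume_closedBall]
          exact ofReal_mul_le_withDensity_ofReal measurableSet_closedBall fun x hx =>
            ((hx₀near x (closedBall_subset_ball hδr hx)).1).le
      _ ≤ (volume.withDensity fun x => ENNReal.ofReal (g x)).map T
            (closedBall (T x₀) (K * δ ^ 2)) :=
          (measure_mono hmaps.subset_preimage).trans (Measure.le_map_apply hT.aemeasurable _)
      _ ≤ ENNReal.ofReal B * ENNReal.ofReal (2 * (K * δ ^ 2)) := by
          rw [hmap, ← Real.volume_closedBall]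
          exact withDensity_ofReal_le_ofReal_mul measurableSet_closedBall fun y hy =>
            ((hcnear y (closedBall_subset_ball hδρ hy)).le.trans (by simp [B, le_abs_self]))
  rw [← ENNReal.ofReal_mul (by positivity), ← ENNReal.ofReal_mul (by positivity),
    ENNReal.ofReal_le_ofReal_iff (by positivity)] at hmass
  nlinarith [mul_lt_mul_of_pos_left hδm (mul_pos two_pos (Set.mem_Ioi.1 hδ))]

/-- For any step size `h > 0`, the pushforward of the standard Gaussian
measure under the forward-Euler map `T x = x - h * x ^ 3` admits no continuous
Lebesgue density. -/
theorem forwardEuler_pushforward_gaussian_no_continuous_density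
    (h : ℝ) (hh : 0 < h) :
    ¬ ∃ f : ℝ → ℝ, Continuous f ∧
      Measure.map (fun x : ℝ => x - h * x ^ 3) (gaussianReal 0 1) =
        volume.withDensity (fun x => ENNReal.ofReal (f x)) := by
  rintro ⟨f, hf, hmap⟩
  obtain ⟨x₀, hx₀⟩ : ∃ x₀ : ℝ, 3 * h * x₀ ^ 2 = 1 :=
    ⟨Real.sqrt (3 * h)⁻¹, by rw [Real.sq_sqrt (by positivity), mul_inv_cancel₀ (by positivity)]⟩
  rw [gaussianReal_of_var_ne_zero 0 one_ne_zero, gaussianPDF_def] at hmap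
  exact map_withDensity_ne_withDensity_of_isBigO_sq (continuous_gaussianPDFReal 0 1).continuousAt
    (gaussianPDFReal_pos 0 1 x₀ one_ne_zero) (by fun_prop)
    (isBigO_sub_mul_pow_three_of_critical hx₀) hf.continuousAt hmap
end

section
/- Let h > 0 and T(x) = x - h·x³. The pushforward of the standard Gaussian measure γ under T is absolutely continuous with respect to Lebesgue measure, and Measure.map T γ = volume.withDensity p₁, where p₁(y) = Σ_{x ∈ T⁻¹({y})} φ(x)/|1 - 3h·x²| (a finite sum over the preimage set, which has at most three elements; the formula is understood Lebesgue-almost everywhere in y). -/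
/-!
The derivative `1 - 3 h x²` of `T x = x - h x³` vanishes only at `±a`, `a = (3h)^{-1/2}`, and
by Darboux's theorem `T` is injective on each of the three open intervals into which `±a` cut
the line. On each such branch the change-of-variables formula transports the Gaussian mass of
`T⁻¹ A` to the integral over `A` of `φ / |T'|` evaluated at the branch's unique preimage point.
Summing over the branches, and discarding the null set `{±a}`, gives the preimage sum; the
critical points do not disturb the sum either, since there the real quotient `φ / 0` is `0`.
-/

open MeasureTheory ProbabilityTheory Set Function
open scoped ENNReal

section PreimageSum

variable {α β ι : Type*}

theorem extend_domRestrict_apply_eq_tsum_preimage_inter {f : α → β} {s : Set α} (hf : InjOn f s)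
    (G : α → ℝ≥0∞) (y : β) :
    extend (s.domRestrict f) (fun x => G x) 0 y = ∑' x : ↥(f ⁻¹' {y} ∩ s), G x := by
  by_cases hy : y ∈ f '' s
  · obtain ⟨x, hx, rfl⟩ := hy
    have hfiber : f ⁻¹' {f x} ∩ s = {x} :=
      Subset.antisymm (fun z hz => hf hz.2 hx hz.1) (singleton_subset_iff.2 ⟨rfl, hx⟩)
    rw [hfiber, tsum_singleton]
    exact (injOn_iff_injective.1 hf).extend_apply _ _ ⟨x, hx⟩
  · have hfiber : f ⁻¹' {y} ∩ s = ∅ :=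
      eq_empty_of_forall_notMem fun z hz => hy ⟨z, hz.2, hz.1⟩
    rw [hfiber, tsum_empty, extend_apply' _ _ _ (by rintro ⟨z, rfl⟩; exact hy ⟨z, z.2, rfl⟩),
      Pi.zero_apply]

theorem MeasurableEmbedding.measurable_tsum_preimage_inter [MeasurableSpace α] [MeasurableSpace β]
    {f : α → β} {s : Set α} (hf : MeasurableEmbedding (s.domRestrict f)) {G : α → ℝ≥0∞}
    (hG : Measurable G) : Measurable fun y => ∑' x : ↥(f ⁻¹' {y} ∩ s), G x := by
  simp_rw [← extend_domRestrict_apply_eq_tsum_preimage_inter (injOn_iff_injective.2 hf.injective)]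
  exact hf.measurable_extend (hG.comp measurable_subtype_coe) measurable_const

theorem ENNReal.tsum_subtype_eq_tsum_tsum_inter {S : Set α} {s : ι → Set α}
    (hs : Pairwise (Disjoint on s)) {G : α → ℝ≥0∞} (hG : ∀ x ∉ ⋃ i, s i, G x = 0) :
    ∑' x : S, G x = ∑' i, ∑' x : ↥(S ∩ s i), G x := by
  rw [tsum_setElem_eq_tsum_setElem_sdiff S (⋃ i, s i)ᶜ hG, sdiff_compl, inter_iUnion,
    ENNReal.tsum_biUnion fun i _ j _ hij => (hs hij).mono inter_subset_right inter_subset_right]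

theorem finite_preimage_singleton_of_injOn [Finite ι] {f : α → β} {s : ι → Set α}
    (hf : ∀ i, InjOn f (s i)) (hs : (⋃ i, s i)ᶜ.Finite) (y : β) : (f ⁻¹' {y}).Finite := by
  have hfiber : ∀ i, (f ⁻¹' {y} ∩ s i).Finite := fun i =>
    Subsingleton.finite fun x hx z hz => hf i hx.2 hz.2 (hx.1.trans hz.1.symm)
  refine (hs.union (finite_iUnion hfiber)).subset fun x hx => ?_
  by_cases hxs : x ∈ ⋃ i, s i
  · obtain ⟨i, hi⟩ := mem_iUnion.1 hxs
    exact Or.inr (mem_iUnion.2 ⟨i, hx, hi⟩)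
  · exact Or.inl hxs

end PreimageSum

theorem Convex.injOn_of_hasDerivWithinAt_ne_zero {s : Set ℝ} (hs : Convex ℝ s) {f f' : ℝ → ℝ}
    (hf : ∀ x ∈ s, HasDerivWithinAt f (f' x) s x) (hf' : ∀ x ∈ s, f' x ≠ 0) : InjOn f s := by
  have hcont : ContinuousOn f s := fun x hx => (hf x hx).continuousWithinAt
  have hint : ∀ x ∈ interior s, HasDerivWithinAt f (f' x) (interior s) x :=
    fun x hx => (hf x (interior_subset hx)).mono interior_subset
  rcases hasDerivWithinAt_forall_lt_or_forall_gt_of_forall_ne hs hf hf' with hneg | hpos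
  · exact (strictAntiOn_of_hasDerivWithinAt_neg hs hcont hint
      fun x hx => hneg x (interior_subset hx)).injOn
  · exact (strictMonoOn_of_hasDerivWithinAt_pos hs hcont hint
      fun x hx => hpos x (interior_subset hx)).injOn

section ChangeOfVariables

variable {E : Type*} [NormedAddCommGroup E] [NormedSpace ℝ E] [FiniteDimensional ℝ E]
  [MeasurableSpace E] [BorelSpace E] (μ : Measure E) [μ.IsAddHaarMeasure]
  {f : E → E} {f' : E → E →L[ℝ] E}

theorem setLIntegral_tsum_preimage_inter_eq {s : Set E} (hs : MeasurableSet s)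
    (hf' : ∀ x ∈ s, HasFDerivWithinAt f (f' x) s x) (hf : InjOn f s)
    (hdet : ∀ x ∈ s, (f' x).det ≠ 0) (g : E → ℝ) {A : Set E} (hA : MeasurableSet A) :
    ∫⁻ y in A, ∑' x : ↥(f ⁻¹' {y} ∩ s), ENNReal.ofReal (g x / |(f' x).det|) ∂μ =
      ∫⁻ x in s, (f ⁻¹' A).indicator (fun x => ENNReal.ofReal (g x)) x ∂μ := by
  simp_rw [← extend_domRestrict_apply_eq_tsum_preimage_inter hf
    fun x => ENNReal.ofReal (g x / |(f' x).det|)]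
  set Ψ := extend (s.domRestrict f) (fun x => ENNReal.ofReal (g x / |(f' x).det|)) 0
  have himage : MeasurableSet (f '' s) := by
    rw [← range_domRestrict]
    exact (measurableEmbedding_of_fderivWithin hs hf' hf).measurableSet_range
  have hsupp : (f '' s).indicator Ψ = Ψ := by
    refine indicator_eq_self.2 fun y hy => ?_
    by_contra hys
    refine hy (extend_apply' _ _ _ ?_)
    rintro ⟨x, rfl⟩
    exact hys ⟨x, x.2, rfl⟩
  calc ∫⁻ y in A, Ψ y ∂μ = ∫⁻ y in A, (f '' s).indicator Ψ y ∂μ := by rw [hsupp]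
    _ = ∫⁻ y in f '' s, A.indicator Ψ y ∂μ := by
        rw [setLIntegral_indicator himage, setLIntegral_indicator hA, inter_comm]
    _ = ∫⁻ x in s, ENNReal.ofReal |(f' x).det| * A.indicator Ψ (f x) ∂μ :=
        lintegral_image_eq_lintegral_abs_det_fderiv_mul μ hs hf' hf _
    _ = ∫⁻ x in s, (f ⁻¹' A).indicator (fun x => ENNReal.ofReal (g x)) x ∂μ := by
        refine setLIntegral_congr_fun hs fun x hx => ?_
        have hΨ : Ψ (f x) = ENNReal.ofReal (g x / |(f' x).det|) :=
          (injOn_iff_injective.1 hf).extend_apply _ _ ⟨x, hx⟩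
        by_cases hxA : f x ∈ A
        · rw [indicator_of_mem hxA, indicator_of_mem (show x ∈ f ⁻¹' A from hxA), hΨ,
            ← ENNReal.ofReal_mul (abs_nonneg _), mul_div_cancel₀ _ (abs_ne_zero.2 (hdet x hx))]
        · rw [indicator_of_notMem hxA, indicator_of_notMem (show x ∉ f ⁻¹' A from hxA), mul_zero]

theorem map_withDensity_ofReal_eq_withDensity_tsum_preimage {ι : Type*} [Countable ι]
    (hf' : ∀ x, HasFDerivAt f (f' x) x) {s : ι → Set E} (hs : ∀ i, MeasurableSet (s i))
    (hdisj : Pairwise (Disjoint on s)) (hinj : ∀ i, InjOn f (s i))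
    (hcover : ⋃ i, s i = {x | (f' x).det ≠ 0}) (hcrit : μ {x | (f' x).det = 0} = 0)
    {g : E → ℝ} (hg : Measurable g) :
    (μ.withDensity fun x => ENNReal.ofReal (g x)).map f =
      μ.withDensity fun y => ∑' x : ↥(f ⁻¹' {y}), ENNReal.ofReal (g x / |(f' x).det|) := by
  have hfm : Measurable f :=
    (continuous_iff_continuousAt.2 fun x => (hf' x).continuousAt).measurable
  have hdet : ∀ i, ∀ x ∈ s i, (f' x).det ≠ 0 := fun i x hx =>
    (hcover ▸ mem_iUnion_of_mem i hx : x ∈ {x | (f' x).det ≠ 0})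
  have hoff : ∀ x ∉ ⋃ i, s i, ENNReal.ofReal (g x / |(f' x).det|) = 0 := fun x hx => by
    rw [hcover, mem_ofPred_eq, not_not] at hx
    simp [hx]
  have hae : μ.restrict (⋃ i, s i) = μ := by
    refine Measure.restrict_eq_self_of_ae_mem (measure_mono_null (fun x hx => ?_) hcrit)
    simpa [hcover] using hx
  have hG : Measurable fun x => ENNReal.ofReal (g x / |(f' x).det|) := by
    have : f' = fderiv ℝ f := funext fun x => (hf' x).fderiv.symm
    rw [this]
    exact ENNReal.measurable_ofReal.comp (hg.div
      (ContinuousLinearMap.continuous_det.measurable.comp (measurable_fderiv ℝ f)).abs)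
  ext A hA
  rw [Measure.map_apply hfm hA, withDensity_apply _ (hfm hA), withDensity_apply _ hA]
  calc ∫⁻ x in f ⁻¹' A, ENNReal.ofReal (g x) ∂μ
      = ∑' i, ∫⁻ x in s i, (f ⁻¹' A).indicator (fun x => ENNReal.ofReal (g x)) x ∂μ := by
        rw [← lintegral_iUnion hs hdisj, hae, lintegral_indicator (hfm hA)]
    _ = ∑' i, ∫⁻ y in A, ∑' x : ↥(f ⁻¹' {y} ∩ s i), ENNReal.ofReal (g x / |(f' x).det|) ∂μ := by
        congr 1 with i
        exact (setLIntegral_tsum_preimage_inter_eq μ (hs i)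
          (fun x _ => (hf' x).hasFDerivWithinAt) (hinj i) (hdet i) g hA).symm
    _ = ∫⁻ y in A, ∑' x : ↥(f ⁻¹' {y}), ENNReal.ofReal (g x / |(f' x).det|) ∂μ := by
        rw [← lintegral_tsum fun i => ((measurableEmbedding_of_fderivWithin (hs i)
          (fun x _ => (hf' x).hasFDerivWithinAt) (hinj i)).measurable_tsum_preimage_inter
          hG).aemeasurable]
        exact lintegral_congr fun y => (ENNReal.tsum_subtype_eq_tsum_tsum_inter hdisj hoff).symm

end ChangeOfVariables

def complPairIntervals (a : ℝ) : Fin 3 → Set ℝ := ![Iio (-a), Ioo (-a) a, Ioi a]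

theorem measurableSet_complPairIntervals (a : ℝ) (i : Fin 3) :
    MeasurableSet (complPairIntervals a i) := by
  fin_cases i <;> simp [complPairIntervals]

theorem convex_complPairIntervals (a : ℝ) (i : Fin 3) : Convex ℝ (complPairIntervals a i) := by
  fin_cases i <;> simp [complPairIntervals, convex_Iio, convex_Ioo, convex_Ioi]

theorem pairwise_disjoint_complPairIntervals {a : ℝ} (ha : 0 ≤ a) :
    Pairwise (Disjoint on complPairIntervals a) := by
  intro i j hij
  fin_cases i <;> fin_cases j <;> simp_all [complPairIntervals, onFun, disjoint_left] <;>
    intros <;> linarith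

theorem iUnion_complPairIntervals {a : ℝ} (ha : 0 ≤ a) :
    ⋃ i, complPairIntervals a i = {-a, a}ᶜ := by
  ext x
  simp only [complPairIntervals, mem_iUnion, Fin.exists_fin_succ, Fin.isValue,
    Matrix.cons_val_zero, mem_Iio, Matrix.cons_val_succ, mem_Ioo, Matrix.cons_val_fin_one, mem_Ioi,
    exists_const, mem_compl_iff, mem_insert_iff, mem_singleton_iff, not_or]
  constructor
  · rintro (hx | ⟨hx, hx'⟩ | hx) <;> constructor <;> rintro rfl <;> linarith
  · rintro ⟨hx, hx'⟩
    rcases lt_or_gt_of_ne hx with hx | hx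
    · exact Or.inl hx
    rcases lt_or_gt_of_ne hx' with hx' | hx'
    · exact Or.inr (Or.inl ⟨hx, hx'⟩)
    · exact Or.inr (Or.inr hx')

theorem finite_compl_iUnion_complPairIntervals {a : ℝ} (ha : 0 ≤ a) :
    (⋃ i, complPairIntervals a i)ᶜ.Finite := by
  rw [iUnion_complPairIntervals ha, compl_compl]
  exact toFinite _

theorem setOf_one_sub_three_mul_sq_eq_zero {h : ℝ} (hh : 0 < h) :
    {x : ℝ | 1 - 3 * h * x ^ 2 = 0} = {-√((3 * h)⁻¹), √((3 * h)⁻¹)} := by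
  ext x
  have ha : √((3 * h)⁻¹) ^ 2 = (3 * h)⁻¹ := Real.sq_sqrt (by positivity)
  rw [mem_ofPred_eq, mem_insert_iff, mem_singleton_iff, or_comm, ← sq_eq_sq_iff_eq_or_eq_neg, ha]
  constructor <;> intro hx <;> field_simp at * <;> linarith

theorem hasDerivAt_sub_mul_pow_three (h x : ℝ) :
    HasDerivAt (fun x : ℝ => x - h * x ^ 3) (1 - 3 * h * x ^ 2) x :=
  ((hasDerivAt_id' x).fun_sub ((hasDerivAt_pow 3 x).const_mul h)).congr_deriv (by ring)

theorem one_sub_three_mul_sq_ne_zero_of_mem_complPairIntervals {h : ℝ} (hh : 0 < h) {i : Fin 3}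
    {x : ℝ} (hx : x ∈ complPairIntervals √((3 * h)⁻¹) i) : 1 - 3 * h * x ^ 2 ≠ 0 := by
  have hx' := (iUnion_complPairIntervals (Real.sqrt_nonneg _)).subset (mem_iUnion_of_mem i hx)
  rwa [← setOf_one_sub_three_mul_sq_eq_zero hh] at hx'

/-- For `h > 0` and `T x = x - h * x ^ 3`, the pushforward of the
standard Gaussian `γ` under `T` is absolutely continuous with respect to Lebesgue
measure, with density `p₁ y = ∑_{x ∈ T⁻¹{y}} φ x / |1 - 3 h x²|`, where
`φ` is the standard Gaussian density (the sum over the preimage set is finite,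
and the formula holds Lebesgue-a.e. in `y`, which is all that the
`withDensity` equality requires). -/
theorem forwardEuler_pushforward_gaussian_density
    (h : ℝ) (hh : 0 < h) :
    Measure.map (fun x : ℝ => x - h * x ^ 3) (gaussianReal 0 1) ≪ volume ∧
    Measure.map (fun x : ℝ => x - h * x ^ 3) (gaussianReal 0 1) =
      volume.withDensity (fun y => ENNReal.ofReal
        (∑' x : ((fun x : ℝ => x - h * x ^ 3) ⁻¹' {y}),
          (Real.sqrt (2 * Real.pi))⁻¹ * Real.exp (-(x : ℝ) ^ 2 / 2) /
            |1 - 3 * h * (x : ℝ) ^ 2|)) := by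
  refine (and_iff_right_of_imp fun hd => hd ▸ withDensity_absolutelyContinuous _ _).2 ?_
  set a := √((3 * h)⁻¹)
  set f' : ℝ → ℝ →L[ℝ] ℝ := fun x => (1 : ℝ →L[ℝ] ℝ).smulRight (1 - 3 * h * x ^ 2)
  have hdet : ∀ x, (f' x).det = 1 - 3 * h * x ^ 2 := by simp [f']
  have hcritical : {x | (f' x).det = 0} = {-a, a} := by
    simp_rw [hdet]
    exact setOf_one_sub_three_mul_sq_eq_zero hh
  have hcover : ⋃ i, complPairIntervals a i = {x | (f' x).det ≠ 0} := by
    rw [iUnion_complPairIntervals (Real.sqrt_nonneg _), ← hcritical, compl_ofPred]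
  have hinj : ∀ i, InjOn (fun x : ℝ => x - h * x ^ 3) (complPairIntervals a i) := fun i =>
    (convex_complPairIntervals a i).injOn_of_hasDerivWithinAt_ne_zero
      (fun x _ => (hasDerivAt_sub_mul_pow_three h x).hasDerivWithinAt)
      fun _ hx => one_sub_three_mul_sq_ne_zero_of_mem_complPairIntervals hh hx
  rw [gaussianReal_of_var_ne_zero 0 one_ne_zero, gaussianPDF_def,
    map_withDensity_ofReal_eq_withDensity_tsum_preimage volume
      (fun x => (hasDerivAt_sub_mul_pow_three h x).hasFDerivAt)
      (measurableSet_complPairIntervals a)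
      (pairwise_disjoint_complPairIntervals (Real.sqrt_nonneg _)) hinj hcover
      (hcritical ▸ (toFinite _).measure_zero _) (measurable_gaussianPDFReal 0 1)]
  congr with y
  have : Finite ((fun x : ℝ => x - h * x ^ 3) ⁻¹' {y}) :=
    (finite_preimage_singleton_of_injOn hinj
      (finite_compl_iUnion_complPairIntervals (Real.sqrt_nonneg _)) y).to_subtype
  rw [ENNReal.ofReal_tsum_of_nonneg (fun _ => by positivity) Summable.of_finite]
  simp [gaussianPDFReal]
end

section
/- Let h > 0, r = (3h)^{-1/2}, y* = (2/3)·r, T(x) = x - h·x³, and define p₁(y) = Σ_{x ∈ T⁻¹({y})} φ(x)/|1 - 3h·x²| for y with T⁻¹({y}) containing no critical point of T. Then p₁(y) tends to +∞ as y tends to y* from the left, while p₁(y) tends to the finite positive limit φ(-2r)/3 as y tends to y* from the right. In particular p₁ has a (blow-up) discontinuity at y*. -/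
/-!
Write `T x = x - h x³` and `y* = T r`, where `3 h r² = 1`. The identity
`y* - T x = h (x - r)² (x + 2r)` says that `y*` is a double value of `T`, attained at the critical
point `r` and at `-2r`. Just below `y*` the equation `T x = y` has a root close to `r`, where the
Jacobian `|1 - 3 h x²|` vanishes, so that root alone makes the density blow up. Just above `y*` the
only root lies below `-2r`, on a branch where `T` is strictly decreasing, and it tends to `-2r`,
where the Jacobian equals `3`.
-/

open Filter Set Topology

section PreimageSums

variable {T f : ℝ → ℝ} {a : ℝ}

theorem tendsto_tsum_preimage_nhdsLT_atTop (hT : Continuous T) (hf₀ : ∀ x, 0 ≤ f x)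
    (hfin : ∀ y, (T ⁻¹' {y}).Finite) (hlt : ∀ x, a < x → T x < T a)
    (hf : Tendsto f (𝓝[>] a) atTop) :
    Tendsto (fun y => ∑' x : T ⁻¹' {y}, f x) (𝓝[<] T a) atTop := by
  refine tendsto_atTop.2 fun M => ?_
  obtain ⟨c, hac, hc⟩ := mem_nhdsGT_iff_exists_Ioo_subset.1 (tendsto_atTop.1 hf M)
  filter_upwards [Ioo_mem_nhdsLT_of_mem ⟨hlt c hac, le_rfl⟩] with y hy
  obtain ⟨x, hx, rfl⟩ := intermediate_value_Ioo' (le_of_lt hac) hT.continuousOn hy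
  calc M ≤ f x := hc hx
    _ ≤ ∑' z : T ⁻¹' {T x}, f z :=
      (hfin (T x)).summable f |>.le_tsum ⟨x, rfl⟩ fun z _ => hf₀ z

theorem tendsto_tsum_preimage_nhdsGT_of_strictAntiOn (hT : Continuous T)
    (hanti : StrictAntiOn T (Iic a)) (hroots : ∀ x, T a < T x → x < a) (hf : ContinuousAt f a) :
    Tendsto (fun y => ∑' x : T ⁻¹' {y}, f x) (𝓝[>] T a) (𝓝 (f a)) := by
  refine fun s hs => mem_map.2 ?_
  obtain ⟨c, hca, hc⟩ := exists_Ioc_subset_of_mem_nhds (hf hs) ⟨a - 1, by linarith⟩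
  filter_upwards [Ioo_mem_nhdsGT_of_mem ⟨le_rfl, hanti (mem_Iic.2 hca.le) self_mem_Iic hca⟩]
    with y hy
  obtain ⟨x₀, hx₀, rfl⟩ := intermediate_value_Ioo' (le_of_lt hca) hT.continuousOn hy
  have hpreimage : T ⁻¹' {T x₀} = {x₀} := by
    ext x
    refine ⟨fun hx => hanti.injOn ?_ (mem_Iic.2 hx₀.2.le) hx, fun hx => by rw [hx]; rfl⟩
    exact mem_Iic.2 (hroots x (hx.symm ▸ hy.1)).le
  show ∑' x : T ⁻¹' {T x₀}, f x ∈ s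
  rw [hpreimage, tsum_singleton]
  exact hc ⟨hx₀.1, hx₀.2.le⟩

end PreimageSums

theorem Filter.Tendsto.div_abs_atTop {α : Type*} {l : Filter α} {g d : α → ℝ} {C : ℝ}
    (hg : Tendsto g l (𝓝 C)) (hC : 0 < C) (hd : Tendsto d l (𝓝 0)) (hd₀ : ∀ᶠ x in l, d x ≠ 0) :
    Tendsto (fun x => g x / |d x|) l atTop := by
  have habs : Tendsto (fun x => |d x|) l (𝓝[>] 0) :=
    tendsto_nhdsWithin_iff.2 ⟨by simpa using hd.abs, hd₀.mono fun x hx => abs_pos.2 hx⟩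
  simpa only [div_eq_mul_inv, Pi.inv_apply] using hg.pos_mul_atTop hC habs.inv_tendsto_nhdsGT_zero

theorem finite_preimage_sub_mul_pow_three {h : ℝ} (hh : h ≠ 0) (y : ℝ) :
    ((fun x : ℝ => x - h * x ^ 3) ⁻¹' {y}).Finite := by
  open Polynomial in
  have hp : (C h * X ^ 3 - X + C y : ℝ[X]) ≠ 0 := fun hp => hh <| by
    simpa [coeff_X] using congrArg (coeff · 3) hp
  refine (finite_setOfPred_isRoot hp).subset fun x hx => ?_
  simp only [mem_preimage, mem_singleton_iff] at hx
  simp [← hx]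

section EulerMap

variable {h r : ℝ}

theorem two_thirds_sub_sub_mul_pow_three (hr : 3 * h * r ^ 2 = 1) (x : ℝ) :
    2 / 3 * r - (x - h * x ^ 3) = h * (x - r) ^ 2 * (x + 2 * r) := by
  linear_combination (x - 2 / 3 * r) * hr

theorem sub_mul_pow_three_lt_two_thirds (hh : 0 < h) (hr₀ : 0 < r) (hr : 3 * h * r ^ 2 = 1)
    {x : ℝ} (hx : r < x) : x - h * x ^ 3 < 2 / 3 * r := by
  have := two_thirds_sub_sub_mul_pow_three hr x
  have : 0 < h * (x - r) ^ 2 * (x + 2 * r) := by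
    have : 0 < x - r := by linarith
    have : 0 < x + 2 * r := by linarith
    positivity
  linarith

theorem lt_neg_two_mul_of_two_thirds_lt (hh : 0 < h) (hr : 3 * h * r ^ 2 = 1) {x : ℝ}
    (hx : 2 / 3 * r < x - h * x ^ 3) : x < -2 * r := by
  have := two_thirds_sub_sub_mul_pow_three hr x
  by_contra! hx'
  have : 0 ≤ h * (x - r) ^ 2 * (x + 2 * r) :=
    mul_nonneg (mul_nonneg hh.le (sq_nonneg _)) (by linarith)
  linarith

theorem strictAntiOn_sub_mul_pow_three (hr₀ : 0 < r) (hr : 3 * h * r ^ 2 = 1) :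
    StrictAntiOn (fun x : ℝ => x - h * x ^ 3) (Iic (-2 * r)) := by
  refine strictAntiOn_of_deriv_neg (convex_Iic _) (by fun_prop) fun x hx => ?_
  rw [interior_Iic, mem_Iio] at hx
  have hderiv : HasDerivAt (fun x : ℝ => x - h * x ^ 3) (1 - 3 * h * x ^ 2) x :=
    ((hasDerivAt_id' x).sub ((hasDerivAt_pow 3 x).const_mul h)).congr_deriv (by norm_num; ring)
  rw [hderiv.deriv]
  nlinarith

theorem tendsto_gaussian_div_abs_nhdsGT_atTop (hr₀ : 0 < r) (hr : 3 * h * r ^ 2 = 1) :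
    Tendsto (fun x : ℝ => (Real.sqrt (2 * Real.pi))⁻¹ * Real.exp (-x ^ 2 / 2) /
      |1 - 3 * h * x ^ 2|) (𝓝[>] r) atTop := by
  refine Tendsto.div_abs_atTop (C := (Real.sqrt (2 * Real.pi))⁻¹ * Real.exp (-r ^ 2 / 2))
    ((Continuous.tendsto (by fun_prop) r).mono_left nhdsWithin_le_nhds) (by positivity) ?_ ?_
  · have := ((Continuous.tendsto (by fun_prop : Continuous fun x : ℝ => 1 - 3 * h * x ^ 2) r))
    rw [hr, sub_self] at this
    exact this.mono_left nhdsWithin_le_nhds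
  · filter_upwards [self_mem_nhdsWithin] with x (hx : r < x)
    nlinarith

end EulerMap

/-- Let `h > 0`, `r = (3h)^(-1/2)`, `y* = (2/3) r`, and
`T x = x - h x³`. With `φ` the standard Gaussian density and
`p₁ y = ∑_{x ∈ T⁻¹{y}} φ x / |1 - 3 h x²|` (the change-of-variables density,
valid at every `y` whose preimage contains no critical point of `T`),
`p₁ y → +∞` as `y → y*⁻`, while `p₁ y → φ(-2r)/3 > 0` as `y → y*⁺`.
In particular `p₁` has a blow-up discontinuity at `y*`. -/
theorem forwardEuler_pushforward_density_blowup
    (h : ℝ) (hh : 0 < h) (r : ℝ) (hr : r = (Real.sqrt (3 * h))⁻¹) :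
    Tendsto
      (fun y : ℝ => ∑' x : ((fun x : ℝ => x - h * x ^ 3) ⁻¹' {y}),
        (Real.sqrt (2 * Real.pi))⁻¹ * Real.exp (-(x : ℝ) ^ 2 / 2) /
          |1 - 3 * h * (x : ℝ) ^ 2|)
      (nhdsWithin (2 / 3 * r) (Set.Iio (2 / 3 * r))) atTop ∧
    Tendsto
      (fun y : ℝ => ∑' x : ((fun x : ℝ => x - h * x ^ 3) ⁻¹' {y}),
        (Real.sqrt (2 * Real.pi))⁻¹ * Real.exp (-(x : ℝ) ^ 2 / 2) /
          |1 - 3 * h * (x : ℝ) ^ 2|)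
      (nhdsWithin (2 / 3 * r) (Set.Ioi (2 / 3 * r)))
      (nhds ((Real.sqrt (2 * Real.pi))⁻¹ * Real.exp (-(-2 * r) ^ 2 / 2) / 3)) := by
  have hr₀ : 0 < r := by rw [hr]; positivity
  have hr' : 3 * h * r ^ 2 = 1 := by
    rw [hr, inv_pow, Real.sq_sqrt (by positivity), mul_inv_cancel₀ (by positivity)]
  have hT : Continuous fun x : ℝ => x - h * x ^ 3 := by fun_prop
  have hTr : r - h * r ^ 3 = 2 / 3 * r := by
    linarith [two_thirds_sub_sub_mul_pow_three hr' r]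
  have hT2r : -2 * r - h * (-2 * r) ^ 3 = 2 / 3 * r := by
    linarith [two_thirds_sub_sub_mul_pow_three hr' (-2 * r)]
  have h2r : |1 - 3 * h * (-2 * r) ^ 2| = 3 := by
    rw [show 1 - 3 * h * (-2 * r) ^ 2 = -3 by linear_combination -4 * hr']
    norm_num
  constructor
  · have := tendsto_tsum_preimage_nhdsLT_atTop hT (fun x => by positivity)
      (finite_preimage_sub_mul_pow_three hh.ne')
      (fun x hx => hTr ▸ sub_mul_pow_three_lt_two_thirds hh hr₀ hr' hx)
      (tendsto_gaussian_div_abs_nhdsGT_atTop hr₀ hr')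
    rwa [hTr] at this
  · have := tendsto_tsum_preimage_nhdsGT_of_strictAntiOn hT
      (strictAntiOn_sub_mul_pow_three hr₀ hr')
      (fun x hx => lt_neg_two_mul_of_two_thirds_lt hh hr' (hT2r ▸ hx))
      (f := fun x : ℝ => (Real.sqrt (2 * Real.pi))⁻¹ * Real.exp (-x ^ 2 / 2) /
          |1 - 3 * h * x ^ 2|) (.div (by fun_prop) (by fun_prop) (by rw [h2r]; norm_num))
    rwa [hT2r, h2r] at this
end

section
/- Let h₀ ∈ (0,1). With V₀, D₀, p₀, ρ₀, T₀ as in the context, the pushforward measure Measure.map T₀ ρ₀ equals volume.withDensity p₁, where p₁(x) = D₀⁻¹·exp(-x²/2) for |x| < 1 and p₁(x) = D₀⁻¹·(1-h₀)⁻¹·exp(-(|x| - h₀)/(1 - h₀) + 1/2) for |x| ≥ 1. -/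
/-!
Writing `T₀ x = (1 - h₀) x + h₀ · max (-1) (min x 1)` exhibits `T₀` as a continuous strictly
increasing bijection of `ℝ`; it is affine on `(-∞, -1]`, `[-1, 1]` and `[1, ∞)`, so off `{-1, 1}`
it is differentiable with derivative `1` on `(-1, 1)` and `1 - h₀` outside. By the
one-dimensional change of variables the pushforward of `p₀ · volume` has density `p₁` as soon as
`|T₀'(x)| · p₁ (T₀ x) = p₀ x`, which holds because `|T₀ x| = (1 - h₀) |x| + h₀` for `|x| ≥ 1`.
-/

open MeasureTheory

/-- The initial potential: `V₀ x = x²/2` for `|x| < 1` and `|x| - 1/2` otherwise. -/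
noncomputable def V₀ (x : ℝ) : ℝ := if |x| < 1 then x ^ 2 / 2 else |x| - 1 / 2

/-- The normalization constant `D₀ = ∫_{-1}^{1} exp(-x²/2) dx + 2 exp(-1/2)`. -/
noncomputable def D₀ : ℝ := (∫ x in (-1 : ℝ)..1, Real.exp (-x ^ 2 / 2)) + 2 * Real.exp (-1 / 2)

/-- The initial density `p₀ = D₀⁻¹ exp(-V₀)`. -/
noncomputable def p₀ (x : ℝ) : ENNReal := ENNReal.ofReal (D₀⁻¹ * Real.exp (-V₀ x))

/-- The initial measure `ρ₀ = p₀ · Lebesgue`. -/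
noncomputable def ρ₀ : Measure ℝ := volume.withDensity p₀

/-- The one-step forward-Euler pushforward map for the Wasserstein gradient flow of
`ρ ↦ KL(ρ | standard Gaussian)` started at `ρ₀`, with step size `h₀`. -/
noncomputable def T₀ (h₀ : ℝ) (x : ℝ) : ℝ :=
  if |x| < 1 then x else if 1 ≤ x then (1 - h₀) * x + h₀ else (1 - h₀) * x - h₀

open Set Function Filter

theorem map_volume_withDensity_eq_of_hasDerivAt {f f' : ℝ → ℝ} {N : Set ℝ} {p q : ℝ → ENNReal}
    (hf : Measurable f) (hbij : Bijective f) (hN : N.Countable)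
    (hf' : ∀ x ∉ N, HasDerivAt f (f' x) x)
    (hpq : ∀ x ∉ N, ENNReal.ofReal |f' x| * q (f x) = p x) :
    Measure.map f (volume.withDensity p) = volume.withDensity q := by
  ext B hB
  rw [Measure.map_apply hf hB, withDensity_apply _ (hf hB), withDensity_apply _ hB]
  set s := f ⁻¹' B \ N
  have hs : MeasurableSet s := (hf hB).diff hN.measurableSet
  have himage : f '' s = B \ f '' N := by
    rw [image_sdiff hbij.injective, image_preimage_eq B hbij.surjective]
  calc ∫⁻ x in f ⁻¹' B, p x = ∫⁻ x in s, p x :=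
        setLIntegral_congr (sdiff_null_ae_eq_self (hN.measure_zero _)).symm
    _ = ∫⁻ x in s, ENNReal.ofReal |f' x| * q (f x) :=
        setLIntegral_congr_fun hs fun x hx => (hpq x hx.2).symm
    _ = ∫⁻ y in f '' s, q y :=
        (lintegral_image_eq_lintegral_abs_deriv_mul hs
          (fun x hx => (hf' x hx.2).hasDerivWithinAt) hbij.injective.injOn q).symm
    _ = ∫⁻ y in B, q y := by
        rw [himage]
        exact setLIntegral_congr (sdiff_null_ae_eq_self ((hN.image f).measure_zero _))

noncomputable def p₁ (h₀ x : ℝ) : ENNReal :=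
  if |x| < 1 then ENNReal.ofReal (D₀⁻¹ * Real.exp (-x ^ 2 / 2))
  else ENNReal.ofReal (D₀⁻¹ * (1 - h₀)⁻¹ * Real.exp (-((|x| - h₀) / (1 - h₀)) + 1 / 2))

section T₀

variable {h₀ x : ℝ}

theorem T₀_of_abs_lt (hx : |x| < 1) : T₀ h₀ x = x := if_pos hx

theorem T₀_of_one_le (hx : 1 ≤ x) : T₀ h₀ x = (1 - h₀) * x + h₀ := by
  rw [T₀, if_neg (by rw [abs_of_nonneg (by linarith)]; linarith), if_pos hx]

theorem T₀_of_le_neg_one (hx : x ≤ -1) : T₀ h₀ x = (1 - h₀) * x - h₀ := by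
  rw [T₀, if_neg (by rw [abs_of_neg (by linarith)]; linarith), if_neg (by linarith)]

theorem T₀_eq_clamp : T₀ h₀ x = (1 - h₀) * x + h₀ * max (-1) (min x 1) := by
  rcases le_or_gt 1 x with hx | hx
  · rw [T₀_of_one_le hx, min_eq_right hx, max_eq_right (by norm_num)]; ring
  rcases le_or_gt x (-1) with hx' | hx'
  · rw [T₀_of_le_neg_one hx', min_eq_left (by linarith), max_eq_left hx']; ring
  · rw [T₀_of_abs_lt (abs_lt.2 ⟨hx', hx⟩), min_eq_left hx.le, max_eq_right hx'.le]; ring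

theorem abs_T₀_of_one_le_abs (hh₁ : h₀ < 1) (hx : 1 ≤ |x|) :
    |T₀ h₀ x| = (1 - h₀) * |x| + h₀ := by
  rcases le_or_gt 0 x with hx₀ | hx₀
  · rw [abs_of_nonneg hx₀] at hx ⊢
    rw [T₀_of_one_le hx, abs_of_nonneg (by nlinarith)]
  · rw [abs_of_neg hx₀] at hx ⊢
    rw [T₀_of_le_neg_one (by linarith), abs_of_nonpos (by nlinarith)]
    ring

theorem continuous_T₀ : Continuous (T₀ h₀) := by
  simp_rw [funext fun x => (T₀_eq_clamp : T₀ h₀ x = _)]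
  fun_prop

theorem strictMono_T₀ (hh₀ : 0 < h₀) (hh₁ : h₀ < 1) : StrictMono (T₀ h₀) := by
  have hclamp : Monotone fun x : ℝ => max (-1) (min x 1) :=
    monotone_const.max (monotone_id.min monotone_const)
  simp_rw [funext fun x => (T₀_eq_clamp : T₀ h₀ x = _)]
  exact (strictMono_mul_left_of_pos (sub_pos.2 hh₁)).add_monotone (hclamp.const_mul hh₀.le)

theorem bijective_T₀ (hh₀ : 0 < h₀) (hh₁ : h₀ < 1) : Bijective (T₀ h₀) := by
  refine ⟨(strictMono_T₀ hh₀ hh₁).injective, continuous_T₀.surjective ?_ ?_⟩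
  · refine tendsto_atTop_mono (fun x => ?_)
      (tendsto_atTop_add_const_right _ (-h₀) (tendsto_id.const_mul_atTop (sub_pos.2 hh₁)))
    rw [id, T₀_eq_clamp]
    linarith [mul_le_mul_of_nonneg_left (le_max_left (-1 : ℝ) (min x 1)) hh₀.le]
  · refine tendsto_atBot_mono (fun x => ?_)
      (tendsto_atBot_add_const_right _ h₀ (tendsto_id.const_mul_atBot (sub_pos.2 hh₁)))
    rw [id, T₀_eq_clamp]
    have hclamp : max (-1) (min x 1) ≤ 1 := max_le (by norm_num) (min_le_right x 1)
    linarith [mul_le_mul_of_nonneg_left hclamp hh₀.le]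

theorem hasDerivAt_T₀ (hx : x ∉ ({-1, 1} : Set ℝ)) :
    HasDerivAt (T₀ h₀) (if |x| < 1 then 1 else 1 - h₀) x := by
  simp only [mem_insert_iff, mem_singleton_iff, not_or] at hx
  have hline (c : ℝ) : HasDerivAt (fun y => (1 - h₀) * y + c) (1 - h₀) x := by
    simpa using ((hasDerivAt_id x).const_mul (1 - h₀)).add_const c
  rcases lt_or_gt_of_ne hx.2 with hx₁ | hx₁
  · rcases lt_or_gt_of_ne hx.1 with hx₂ | hx₂
    · rw [if_neg (by rw [abs_of_neg (by linarith)]; linarith)]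
      refine (hline (-h₀)).congr_of_eventuallyEq ?_
      filter_upwards [Iio_mem_nhds hx₂] with y hy
      rw [T₀_of_le_neg_one (le_of_lt hy), sub_eq_add_neg]
    · have hx' : |x| < 1 := abs_lt.2 ⟨hx₂, hx₁⟩
      rw [if_pos hx']
      refine (hasDerivAt_id x).congr_of_eventuallyEq ?_
      filter_upwards [(isOpen_lt continuous_abs continuous_const).mem_nhds hx'] with y hy
      exact T₀_of_abs_lt hy
  · rw [if_neg (by rw [abs_of_pos (by linarith)]; linarith)]
    refine (hline h₀).congr_of_eventuallyEq ?_
    filter_upwards [Ioi_mem_nhds hx₁] with y hy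
    exact T₀_of_one_le (le_of_lt hy)

theorem ofReal_mul_p₁_T₀ (hh₁ : h₀ < 1) (x : ℝ) :
    ENNReal.ofReal |if |x| < 1 then 1 else 1 - h₀| * p₁ h₀ (T₀ h₀ x) = p₀ x := by
  by_cases hx : |x| < 1
  · simp [p₁, p₀, V₀, hx, T₀_of_abs_lt hx, neg_div]
  · have hT := abs_T₀_of_one_le_abs hh₁ (not_lt.1 hx)
    have hh : 0 < 1 - h₀ := sub_pos.2 hh₁
    rw [if_neg hx, p₁, if_neg (by rw [hT]; nlinarith), p₀, V₀, if_neg hx, hT,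
      ← ENNReal.ofReal_mul (abs_nonneg _), abs_of_pos hh]
    have hexp : -(((1 - h₀) * |x| + h₀ - h₀) / (1 - h₀)) + 1 / 2 = -(|x| - 1 / 2) := by
      field_simp
      ring
    rw [hexp]
    field_simp

end T₀

/-- For `h₀ ∈ (0,1)`, the pushforward `(T₀)_♯ ρ₀` equals the Lebesgue
measure with density `p₁`, where `p₁ x = D₀⁻¹ exp(-x²/2)` for `|x| < 1` and
`p₁ x = D₀⁻¹ (1-h₀)⁻¹ exp(-(|x| - h₀)/(1-h₀) + 1/2)` for `|x| ≥ 1`. -/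
theorem forwardEuler_step_density
    (h₀ : ℝ) (hh0 : 0 < h₀) (hh1 : h₀ < 1) :
    Measure.map (T₀ h₀) ρ₀ =
      volume.withDensity (fun x =>
        if |x| < 1 then ENNReal.ofReal (D₀⁻¹ * Real.exp (-x ^ 2 / 2))
        else ENNReal.ofReal
          (D₀⁻¹ * (1 - h₀)⁻¹ * Real.exp (-((|x| - h₀) / (1 - h₀)) + 1 / 2))) :=
  map_volume_withDensity_eq_of_hasDerivAt continuous_T₀.measurable (bijective_T₀ hh0 hh1)
    ((countable_singleton 1).insert (-1)) (fun _ => hasDerivAt_T₀)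
    (fun x _ => ofReal_mul_p₁_T₀ hh1 x)
end

section
/- Let d ≥ 1, m ∈ ℕ, and M, M₀ > 0. Let U : ℝ^d → ℝ be C^∞ and V : ℝ^d → ℝ be C^{m+2}, with ⟪∇U(x) - ∇U(y), x - y⟫ ≤ M·‖x - y‖² and ⟪∇V(x) - ∇V(y), x - y⟫ ≥ -M₀·‖x - y‖² for all x, y. Let h ∈ (0, 1/(M + M₀)) and T(x) = x + h·∇V(x) - h·∇U(x). Then T is a bijection of ℝ^d, and its inverse T⁻¹ is C^{m+1}: there exists g : ℝ^d → ℝ^d of class C^{m+1} with g ∘ T = id and T ∘ g = id. -/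
open scoped RealInnerProductSpace
open Filter Topology

/-- Auxiliary: the gradient of a `C^{n+1}` function on Euclidean space is `C^n`. -/
lemma contDiff_gradient_aux {d : ℕ} {n : ℕ} {f : EuclideanSpace ℝ (Fin d) → ℝ}
    (hf : ContDiff ℝ (n + 1 : ℕ) f) :
    ContDiff ℝ (n : ℕ) (gradient f) := by
  have hfd : ContDiff ℝ (n : ℕ) (fderiv ℝ f) := hf.fderiv_right (by norm_cast)
  let L : StrongDual ℝ (EuclideanSpace ℝ (Fin d)) →ₗ[ℝ] EuclideanSpace ℝ (Fin d) :=
    { toFun := (InnerProductSpace.toDual ℝ _).symm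
      map_add' := fun a b => map_add _ a b
      map_smul' := fun c a => by
        simpa [starRingEnd_apply] using
          (InnerProductSpace.toDual ℝ (EuclideanSpace ℝ (Fin d))).symm.map_smulₛₗ c a }
  have hL : Continuous L := (InnerProductSpace.toDual ℝ _).symm.continuous
  exact (ContinuousLinearMap.contDiff (⟨L, hL⟩ : _ →L[ℝ] _)).comp hfd

set_option maxHeartbeats 2000000 in
/-- On `ℝ^d` (`d ≥ 1`), let `U` be `C^∞` and `V` be `C^{m+2}` with
`⟪∇U x - ∇U y, x - y⟫ ≤ M ‖x - y‖²` and `⟪∇V x - ∇V y, x - y⟫ ≥ -M₀ ‖x - y‖²`.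
For `h ∈ (0, 1/(M + M₀))`, the forward-Euler map `T x = x + h ∇V x - h ∇U x` is a
bijection of `ℝ^d` whose inverse is `C^{m+1}`: there is a `C^{m+1}` map `g` with
`g ∘ T = id` and `T ∘ g = id`. -/
theorem forwardEuler_map_bijective_smooth_inverse
    (d : ℕ) (hd : 1 ≤ d) (m : ℕ) (M M₀ : ℝ) (hM : 0 < M) (hM₀ : 0 < M₀)
    (U V : EuclideanSpace ℝ (Fin d) → ℝ)
    (hU : ContDiff ℝ (⊤ : ℕ∞) U) (hV : ContDiff ℝ (m + 2 : ℕ) V)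
    (hgU : ∀ x y, ⟪gradient U x - gradient U y, x - y⟫ ≤ M * ‖x - y‖ ^ 2)
    (hgV : ∀ x y, ⟪gradient V x - gradient V y, x - y⟫ ≥ -M₀ * ‖x - y‖ ^ 2)
    (h : ℝ) (hh0 : 0 < h) (hh1 : h < 1 / (M + M₀)) :
    Function.Bijective
      (fun x : EuclideanSpace ℝ (Fin d) => x + h • gradient V x - h • gradient U x) ∧
    ∃ g : EuclideanSpace ℝ (Fin d) → EuclideanSpace ℝ (Fin d),
      ContDiff ℝ (m + 1 : ℕ) g ∧
      g ∘ (fun x : EuclideanSpace ℝ (Fin d) =>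
        x + h • gradient V x - h • gradient U x) = id ∧
      (fun x : EuclideanSpace ℝ (Fin d) =>
        x + h • gradient V x - h • gradient U x) ∘ g = id := by
  set T : EuclideanSpace ℝ (Fin d) → EuclideanSpace ℝ (Fin d) := fun x => x + h • gradient V x - h • gradient U x with hTdef
  set c : ℝ := 1 - h * (M + M₀) with hcdef
  have hMM : 0 < M + M₀ := by linarith
  have hc0 : 0 < c := by
    have : h * (M + M₀) < 1 := by
      calc h * (M + M₀) < (1 / (M + M₀)) * (M + M₀) := by
            exact mul_lt_mul_of_pos_right hh1 hMM
        _ = 1 := by field_simp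
    simp only [hcdef]; linarith
  -- smoothness of T
  have hgradV : ContDiff ℝ (m + 1 : ℕ) (gradient V) :=
    contDiff_gradient_aux (by exact_mod_cast hV)
  have hgradU : ContDiff ℝ (m + 1 : ℕ) (gradient U) :=
    contDiff_gradient_aux (hU.of_le (by exact_mod_cast le_top))
  have hTsmooth : ContDiff ℝ (m + 1 : ℕ) T := by
    exact ((contDiff_id.add (hgradV.const_smul h)).sub (hgradU.const_smul h))
  have hone : ((m + 1 : ℕ) : WithTop ℕ∞) ≠ 0 := by exact_mod_cast Nat.succ_ne_zero m
  have hTdiff : Differentiable ℝ T := hTsmooth.differentiable hone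
  have hTcont : Continuous T := hTdiff.continuous
  -- strong monotonicity of T
  have hmono : ∀ x y : EuclideanSpace ℝ (Fin d), c * ‖x - y‖ ^ 2 ≤ ⟪T x - T y, x - y⟫ := by
    intro x y
    have hTxy : T x - T y =
        (x - y) + h • (gradient V x - gradient V y) - h • (gradient U x - gradient U y) := by
      simp only [hTdef, smul_sub]; abel
    have hin : ⟪T x - T y, x - y⟫ =
        ⟪x - y, x - y⟫ + h * ⟪gradient V x - gradient V y, x - y⟫
          - h * ⟪gradient U x - gradient U y, x - y⟫ := by
      rw [hTxy, inner_sub_left, inner_add_left, real_inner_smul_left, real_inner_smul_left]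
    rw [hin, real_inner_self_eq_norm_sq]
    have h1 := hgU x y
    have h2 := hgV x y
    nlinarith [mul_le_mul_of_nonneg_left h1 hh0.le, mul_le_mul_of_nonneg_left h2 hh0.le]
  -- expansivity
  have hexp : ∀ x y : EuclideanSpace ℝ (Fin d), c * ‖x - y‖ ≤ ‖T x - T y‖ := by
    intro x y
    rcases eq_or_ne x y with rfl | hne
    · simp
    · have hxy : 0 < ‖x - y‖ := by
        simpa [norm_pos_iff, sub_eq_zero] using hne
      have h1 := hmono x y
      have h2 : ⟪T x - T y, x - y⟫ ≤ ‖T x - T y‖ * ‖x - y‖ := real_inner_le_norm _ _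
      nlinarith
  have hinj : Function.Injective T := by
    intro x y hxy
    have := hexp x y
    rw [hxy, sub_self, norm_zero] at this
    have : ‖x - y‖ ≤ 0 := by nlinarith [norm_nonneg (x - y)]
    have : x - y = 0 := by
      have := le_antisymm this (norm_nonneg _); simpa [norm_eq_zero] using this
    simpa [sub_eq_zero] using this
  -- derivative lower bound
  have hderiv : ∀ x v : EuclideanSpace ℝ (Fin d), c * ‖v‖ ^ 2 ≤ ⟪fderiv ℝ T x v, v⟫ := by
    intro x v
    set ψ : ℝ → ℝ := fun t => ⟪T (x + t • v) - T x, v⟫ with hψdef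
    have hφ : HasDerivAt (fun t : ℝ => T (x + t • v)) (fderiv ℝ T x v) 0 := by
      have hline : HasDerivAt (fun t : ℝ => x + t • v) v 0 := by
        simpa using ((hasDerivAt_id (0:ℝ)).smul_const v).const_add x
      have := (hTdiff (x + (0:ℝ) • v)).hasFDerivAt.comp_hasDerivAt 0 hline
      simp only [zero_smul, add_zero] at this
      exact this
    have hψ : HasDerivAt ψ ⟪fderiv ℝ T x v, v⟫ 0 := by
      have hi : HasDerivAt (fun t : ℝ => ⟪T (x + t • v), v⟫) ⟪fderiv ℝ T x v, v⟫ 0 := by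
        have := hφ.inner ℝ (hasDerivAt_const (0:ℝ) v)
        simpa using this
      have := hi.sub_const ⟪T x, v⟫
      simpa [hψdef, inner_sub_left] using this
    have hslope : Tendsto (fun t : ℝ => ψ t / t) (𝓝[>] (0:ℝ)) (𝓝 ⟪fderiv ℝ T x v, v⟫) := by
      have := hasDerivAt_iff_tendsto_slope.1 hψ
      have h2 : Tendsto (slope ψ 0) (𝓝[>] (0:ℝ)) (𝓝 ⟪fderiv ℝ T x v, v⟫) :=
        this.mono_left (nhdsWithin_mono _ (fun t ht => by
          simp only [Set.mem_setOf_eq, Set.mem_compl_iff, Set.mem_singleton_iff]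
          exact ne_of_gt ht))
      refine h2.congr (fun t => ?_)
      have : ψ 0 = 0 := by simp [hψdef]
      simp [slope, this, div_eq_inv_mul]
    refine ge_of_tendsto hslope ?_
    filter_upwards [self_mem_nhdsWithin] with t ht
    have ht0 : 0 < t := ht
    have hm := hmono (x + t • v) x
    have hsub : (x + t • v) - x = t • v := by abel
    rw [hsub] at hm
    have hnorm : ‖t • v‖ ^ 2 = t ^ 2 * ‖v‖ ^ 2 := by
      rw [norm_smul, mul_pow, Real.norm_eq_abs, sq_abs]
    have hinner : ⟪T (x + t • v) - T x, t • v⟫ = t * ψ t := by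
      rw [real_inner_smul_right]
    rw [hnorm, hinner] at hm
    rw [le_div_iff₀ ht0]
    nlinarith
  -- the derivative is a continuous linear equivalence at every point
  have hAbij : ∀ x : EuclideanSpace ℝ (Fin d), Function.Bijective (fderiv ℝ T x) := by
    intro x
    have hinjA : Function.Injective (fderiv ℝ T x) := by
      intro v w hvw
      have hz : fderiv ℝ T x (v - w) = 0 := by rw [map_sub, hvw, sub_self]
      have := hderiv x (v - w)
      rw [hz] at this
      simp only [inner_zero_left] at this
      have hvw0 : ‖v - w‖ ^ 2 ≤ 0 := by nlinarith
      have : v - w = 0 := by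
        have := norm_nonneg (v - w)
        have h2 : ‖v - w‖ = 0 := by nlinarith
        simpa [norm_eq_zero] using h2
      simpa [sub_eq_zero] using this
    exact ⟨hinjA, LinearMap.injective_iff_surjective.1 hinjA⟩
  let A : ∀ x : EuclideanSpace ℝ (Fin d), EuclideanSpace ℝ (Fin d) ≃L[ℝ] EuclideanSpace ℝ (Fin d) := fun x =>
    (LinearEquiv.ofBijective ((fderiv ℝ T x) : EuclideanSpace ℝ (Fin d) →ₗ[ℝ] EuclideanSpace ℝ (Fin d)) (hAbij x)).toContinuousLinearEquiv
  have hAcoe : ∀ x : EuclideanSpace ℝ (Fin d), ((A x : EuclideanSpace ℝ (Fin d) →L[ℝ] EuclideanSpace ℝ (Fin d)) : EuclideanSpace ℝ (Fin d) → EuclideanSpace ℝ (Fin d)) = fderiv ℝ T x := fun x => rfl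
  have hAfderiv : ∀ x : EuclideanSpace ℝ (Fin d), HasFDerivAt T ((A x : EuclideanSpace ℝ (Fin d) →L[ℝ] EuclideanSpace ℝ (Fin d))) x := by
    intro x
    exact (hTdiff x).hasFDerivAt
  have hstrict : ∀ x : EuclideanSpace ℝ (Fin d), HasStrictFDerivAt T ((A x : EuclideanSpace ℝ (Fin d) →L[ℝ] EuclideanSpace ℝ (Fin d))) x := fun x =>
    (hTsmooth.contDiffAt).hasStrictFDerivAt' (hAfderiv x) hone
  -- T is an open map
  have hopen : IsOpenMap T := by
    refine IsOpenMap.of_nhds_le fun a => ?_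
    exact ((hstrict a).map_nhds_eq_of_equiv).ge
  -- range of T is closed
  have hclosed : IsClosed (Set.range T) := by
    refine IsSeqClosed.isClosed ?_
    intro u z hu hz
    choose a ha using hu
    have hcauchy : CauchySeq a := by
      rw [Metric.cauchySeq_iff]
      intro ε hε
      have hcu : CauchySeq u := hz.cauchySeq
      rw [Metric.cauchySeq_iff] at hcu
      obtain ⟨N, hN⟩ := hcu (c * ε) (by positivity)
      refine ⟨N, fun i hi j hj => ?_⟩
      have h1 := hexp (a i) (a j)
      have h2 := hN i hi j hj
      rw [dist_eq_norm] at h2 ⊢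
      rw [ha i, ha j] at h1
      nlinarith
    obtain ⟨x, hx⟩ := cauchySeq_tendsto_of_complete hcauchy
    refine ⟨x, ?_⟩
    have h1 : Tendsto (fun n => T (a n)) atTop (𝓝 (T x)) :=
      (hTcont.continuousAt.tendsto).comp hx
    have h2 : Tendsto u atTop (𝓝 (T x)) := by
      refine h1.congr fun n => ha n
    exact tendsto_nhds_unique h2 hz
  -- surjectivity
  have hsurj : Function.Surjective T := by
    have hclopen : IsClopen (Set.range T) := ⟨hclosed, hopen.isOpen_range⟩
    have : Set.range T = Set.univ := hclopen.eq_univ ⟨T 0, Set.mem_range_self 0⟩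
    intro z
    have : z ∈ Set.range T := this ▸ Set.mem_univ z
    exact this
  have hbij : Function.Bijective T := ⟨hinj, hsurj⟩
  refine ⟨hbij, ?_⟩
  -- global inverse
  set g : EuclideanSpace ℝ (Fin d) → EuclideanSpace ℝ (Fin d) := Function.invFun T with hgdef
  have hgright : Function.RightInverse g T := Function.rightInverse_invFun hsurj
  have hgleft : Function.LeftInverse g T := Function.leftInverse_invFun hinj
  refine ⟨g, ?_, funext hgleft, funext hgright⟩
  -- smoothness of g
  rw [contDiff_iff_contDiffAt]
  intro z
  obtain ⟨a, rfl⟩ := hsurj z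
  have hlocal : ContDiffAt ℝ (m + 1 : ℕ)
      ((hTsmooth.contDiffAt (x := a)).localInverse (hAfderiv a) hone) (T a) :=
    (hTsmooth.contDiffAt).to_localInverse (hAfderiv a) hone
  refine hlocal.congr_of_eventuallyEq ?_
  have hri : ∀ᶠ y in 𝓝 (T a),
      T (((hTsmooth.contDiffAt (x := a)).localInverse (hAfderiv a) hone) y) = y := by
    exact ((hTsmooth.contDiffAt (x := a)).hasStrictFDerivAt'
      (hAfderiv a) hone).eventually_right_inverse
  filter_upwards [hri] with y hy
  have : T (g y) = y := hgright y
  exact hinj (by rw [this, hy])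
end

section
/- Let d ≥ 1, m ∈ ℕ, and M, M₀ > 0. Let U : ℝ^d → ℝ be C^∞ and V : ℝ^d → ℝ be C^{m+2}, with ⟪∇U(x) - ∇U(y), x - y⟫ ≤ M·‖x - y‖² and ⟪∇V(x) - ∇V(y), x - y⟫ ≥ -M₀·‖x - y‖² for all x, y. Let h ∈ (0, 1/(M + M₀)), T(x) = x + h·∇V(x) - h·∇U(x), and let g be the (two-sided) inverse of T. Define V₁ : ℝ^d → ℝ by V₁(y) = V(g(y)) + log (det (DT(g(y)))), where DT denotes the derivative of T. Then V₁ is of class C^m, and the pushforward of the measure with Lebesgue density exp(-V) under T is the measure with Lebesgue density exp(-V₁): Measure.map T (volume.withDensity (x ↦ ENNReal.ofReal (exp(-V x)))) = volume.withDensity (y ↦ ENNReal.ofReal (exp(-V₁ y))). -/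
open MeasureTheory
open scoped RealInnerProductSpace ENNReal

set_option maxHeartbeats 2000000

private lemma inner_fderiv_le_of_monotone_bound
    {E : Type*} [NormedAddCommGroup E] [InnerProductSpace ℝ E]
    {f : E → E} {x v : E} {f' : E →L[ℝ] E} (hf : HasFDerivAt f f' x) {M : ℝ}
    (hb : ∀ t : ℝ, ⟪f (x + t • v) - f x, t • v⟫ ≤ M * ‖t • v‖ ^ 2) :
    ⟪f' v, v⟫ ≤ M * ‖v‖ ^ 2 := by
  have hline : HasDerivAt (fun t : ℝ => x + t • v) v 0 := by
    simpa using ((hasDerivAt_id (0 : ℝ)).smul_const v).const_add x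
  have h2 : HasDerivAt (fun t : ℝ => f (x + t • v)) (f' v) 0 := by
    have hf' : HasFDerivAt f f' (x + (0 : ℝ) • v) := by simpa using hf
    exact hf'.comp_hasDerivAt (0 : ℝ) hline
  have h3 : HasDerivAt (fun t : ℝ => ⟪f (x + t • v), v⟫) ⟪f' v, v⟫ 0 := by
    have := h2.inner ℝ (hasDerivAt_const (0 : ℝ) v)
    simpa using this
  rw [hasDerivAt_iff_tendsto_slope] at h3
  have h4 : Filter.Tendsto (slope (fun t : ℝ => ⟪f (x + t • v), v⟫) 0) (nhdsWithin 0 (Set.Ioi 0))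
      (nhds ⟪f' v, v⟫) :=
    h3.mono_left (nhdsWithin_mono _ (fun t ht => ne_of_gt ht))
  refine le_of_tendsto h4 ?_
  filter_upwards [self_mem_nhdsWithin] with t ht
  have htpos : (0 : ℝ) < t := ht
  have hbt := hb t
  have hsub : ⟪f (x + t • v) - f x, t • v⟫ = t * ⟪f (x + t • v) - f x, v⟫ :=
    real_inner_smul_right _ _ _
  have hnorm : ‖t • v‖ ^ 2 = t ^ 2 * ‖v‖ ^ 2 := by
    rw [norm_smul]
    rw [mul_pow, Real.norm_eq_abs, sq_abs]
  rw [hsub, hnorm] at hbt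
  have hslope : slope (fun t : ℝ => ⟪f (x + t • v), v⟫) 0 t
      = ⟪f (x + t • v) - f x, v⟫ / t := by
    rw [slope_def_field]
    rw [inner_sub_left]
    simp [div_eq_mul_inv]
  rw [hslope, div_le_iff₀ htpos]
  nlinarith [hbt, htpos]

private lemma contDiff_clm_det {d : ℕ} {n : WithTop ℕ∞} :
    ContDiff ℝ n fun A : EuclideanSpace ℝ (Fin d) →L[ℝ] EuclideanSpace ℝ (Fin d) => A.det := by
  classical
  set b := (EuclideanSpace.basisFun (Fin d) ℝ).toBasis with hb
  have hdet : (fun A : EuclideanSpace ℝ (Fin d) →L[ℝ] EuclideanSpace ℝ (Fin d) => A.det)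
      = fun A => ∑ σ : Equiv.Perm (Fin d),
          ((Equiv.Perm.sign σ : ℤ) : ℝ) * ∏ i, (A (b i)) (σ i) := by
    funext A
    show LinearMap.det (↑A : EuclideanSpace ℝ (Fin d) →ₗ[ℝ] EuclideanSpace ℝ (Fin d)) = _
    rw [← LinearMap.det_toMatrix b, Matrix.det_apply']
    refine Finset.sum_congr rfl fun σ _ => ?_
    congr 1
    refine Finset.prod_congr rfl fun i _ => ?_
    rw [LinearMap.toMatrix_apply]
    simp [hb, OrthonormalBasis.coe_toBasis_repr_apply, EuclideanSpace.basisFun_repr]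
  rw [hdet]
  refine ContDiff.sum fun σ _ => contDiff_const.mul ?_
  refine contDiff_prod fun i _ => ?_
  exact ((EuclideanSpace.proj (σ i)).comp
    (ContinuousLinearMap.apply ℝ (EuclideanSpace ℝ (Fin d)) (b i))).contDiff

private lemma map_withDensity_comp {α β : Type*} [MeasurableSpace α] [MeasurableSpace β]
    (ν : Measure α) {f : α → β} (hf : Measurable f) {w : β → ℝ≥0∞} (hw : Measurable w) :
    Measure.map f (ν.withDensity fun x => w (f x)) = (Measure.map f ν).withDensity w := by
  ext s hs
  rw [Measure.map_apply hf hs, withDensity_apply _ (hf hs), withDensity_apply _ hs,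
    setLIntegral_map hs hw hf]

/-- On `ℝ^d` (`d ≥ 1`), let `U` be `C^∞` and `V` be `C^{m+2}` with the
monotonicity bounds `⟪∇U x - ∇U y, x - y⟫ ≤ M ‖x - y‖²` and
`⟪∇V x - ∇V y, x - y⟫ ≥ -M₀ ‖x - y‖²`, and let `h ∈ (0, 1/(M + M₀))`. Let
`T x = x + h ∇V x - h ∇U x`, let `g` be a two-sided inverse of `T`, and set
`V₁ y = V (g y) + log (det DT(g y))`. Then `V₁` is `C^m`, and the pushforward under `T`
of the measure with Lebesgue density `exp(-V)` is the measure with Lebesgue density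
`exp(-V₁)`. -/
theorem forwardEuler_pushforward_potential_loses_two_derivatives
    (d : ℕ) (hd : 1 ≤ d) (m : ℕ) (M M₀ : ℝ) (hM : 0 < M) (hM₀ : 0 < M₀)
    (U V : EuclideanSpace ℝ (Fin d) → ℝ)
    (hU : ContDiff ℝ (⊤ : ℕ∞) U) (hV : ContDiff ℝ (m + 2 : ℕ) V)
    (hgU : ∀ x y, ⟪gradient U x - gradient U y, x - y⟫ ≤ M * ‖x - y‖ ^ 2)
    (hgV : ∀ x y, ⟪gradient V x - gradient V y, x - y⟫ ≥ -M₀ * ‖x - y‖ ^ 2)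
    (h : ℝ) (hh0 : 0 < h) (hh1 : h < 1 / (M + M₀))
    (T g : EuclideanSpace ℝ (Fin d) → EuclideanSpace ℝ (Fin d))
    (hT : T = fun x => x + h • gradient V x - h • gradient U x)
    (hg1 : Function.LeftInverse g T) (hg2 : Function.RightInverse g T)
    (V₁ : EuclideanSpace ℝ (Fin d) → ℝ)
    (hV₁ : V₁ = fun y => V (g y) + Real.log ((fderiv ℝ T (g y)).det)) :
    ContDiff ℝ (m : ℕ) V₁ ∧
    Measure.map T (volume.withDensity fun x => ENNReal.ofReal (Real.exp (-V x))) =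
      volume.withDensity fun y => ENNReal.ofReal (Real.exp (-V₁ y)) := by
  classical
  have hMM : (0 : ℝ) < M + M₀ := by linarith
  have hc : 0 < 1 - h * (M + M₀) := by
    have := (lt_div_iff₀ hMM).mp hh1
    linarith
  -- smoothness of the gradients
  have hgradV : ContDiff ℝ (m + 1 : ℕ) (gradient V) := by
    have h1 : ContDiff ℝ (m + 1 : ℕ) (fderiv ℝ V) :=
      hV.fderiv_right (by norm_cast)
    exact ((InnerProductSpace.toDual ℝ (EuclideanSpace ℝ (Fin d))).symm.contDiff).comp h1
  have hgradU : ContDiff ℝ (m + 1 : ℕ) (gradient U) := by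
    have h1 : ContDiff ℝ (m + 1 : ℕ) (fderiv ℝ U) :=
      hU.fderiv_right (by exact_mod_cast le_top)
    exact ((InnerProductSpace.toDual ℝ (EuclideanSpace ℝ (Fin d))).symm.contDiff).comp h1
  have hTc : ContDiff ℝ (m + 1 : ℕ) T := by
    rw [hT]
    exact (contDiff_id.add (hgradV.const_smul h)).sub (hgradU.const_smul h)
  have hone : ((m + 1 : ℕ) : WithTop ℕ∞) ≠ 0 := by
    exact_mod_cast Nat.succ_ne_zero m
  -- derivative of T
  have hDV : ∀ x, HasFDerivAt (gradient V) (fderiv ℝ (gradient V) x) x := fun x =>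
    ((hgradV.differentiable hone) x).hasFDerivAt
  have hDU : ∀ x, HasFDerivAt (gradient U) (fderiv ℝ (gradient U) x) x := fun x =>
    ((hgradU.differentiable hone) x).hasFDerivAt
  have hTder : ∀ x, HasFDerivAt T
      (ContinuousLinearMap.id ℝ (EuclideanSpace ℝ (Fin d)) + h • fderiv ℝ (gradient V) x
        - h • fderiv ℝ (gradient U) x) x := by
    intro x
    rw [hT]
    exact ((hasFDerivAt_id x).add ((hDV x).const_smul h)).sub ((hDU x).const_smul h)
  have hfderT : ∀ x, HasFDerivAt T (fderiv ℝ T x) x := fun x => ((hTder x).differentiableAt).hasFDerivAt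
  have hfder : ∀ x, fderiv ℝ T x
      = ContinuousLinearMap.id ℝ (EuclideanSpace ℝ (Fin d)) + h • fderiv ℝ (gradient V) x
        - h • fderiv ℝ (gradient U) x := fun x => (hTder x).fderiv
  -- coercivity of the derivative
  have hcoer : ∀ x v, (1 - h * (M + M₀)) * ‖v‖ ^ 2 ≤ ⟪fderiv ℝ T x v, v⟫ := by
    intro x v
    have hU' : ⟪fderiv ℝ (gradient U) x v, v⟫ ≤ M * ‖v‖ ^ 2 := by
      refine inner_fderiv_le_of_monotone_bound (hDU x) fun t => ?_
      simpa [add_sub_cancel_left] using hgU (x + t • v) x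
    have hV' : ⟪(-(fderiv ℝ (gradient V) x)) v, v⟫ ≤ M₀ * ‖v‖ ^ 2 := by
      refine inner_fderiv_le_of_monotone_bound ((hDV x).neg) fun t => ?_
      have := hgV (x + t • v) x
      rw [ge_iff_le, neg_mul, neg_le] at this
      have heq : (-gradient V) (x + t • v) - (-gradient V) x
          = -(gradient V (x + t • v) - gradient V x) := by
        simp only [Pi.neg_apply]; abel
      rw [heq, inner_neg_left]
      simpa [add_sub_cancel_left] using this
    have hVv : -(M₀ * ‖v‖ ^ 2) ≤ ⟪fderiv ℝ (gradient V) x v, v⟫ := by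
      rw [ContinuousLinearMap.neg_apply, inner_neg_left] at hV'
      linarith
    rw [hfder x]
    have happ : (ContinuousLinearMap.id ℝ (EuclideanSpace ℝ (Fin d)) + h • fderiv ℝ (gradient V) x
        - h • fderiv ℝ (gradient U) x) v
        = v + h • fderiv ℝ (gradient V) x v - h • fderiv ℝ (gradient U) x v := by
      simp
    rw [happ, inner_sub_left, inner_add_left, real_inner_smul_left, real_inner_smul_left,
      real_inner_self_eq_norm_sq]
    nlinarith [mul_le_mul_of_nonneg_left hU' hh0.le, mul_le_mul_of_nonneg_left hVv hh0.le]
  -- injectivity of the derivative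
  have hinj : ∀ x, Function.Injective (fderiv ℝ T x) := by
    intro x u w huw
    have h0 : fderiv ℝ T x (u - w) = 0 := by
      rw [map_sub, huw, sub_self]
    have h1 : (1 - h * (M + M₀)) * ‖u - w‖ ^ 2 ≤ 0 := by
      simpa [h0] using hcoer x (u - w)
    have h2 : ‖u - w‖ ^ 2 ≤ 0 := by nlinarith [sq_nonneg ‖u - w‖]
    have : u - w = 0 := by
      have := pow_eq_zero_iff (n := 2) (by norm_num) |>.mp
        (le_antisymm h2 (sq_nonneg _))
      simpa [norm_eq_zero] using this
    exact sub_eq_zero.mp this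
  -- nonvanishing determinant
  have hdet : ∀ x, (fderiv ℝ T x).det ≠ 0 := by
    intro x hdet0
    have hker : LinearMap.ker ((fderiv ℝ T x) : EuclideanSpace ℝ (Fin d) →ₗ[ℝ] EuclideanSpace ℝ (Fin d)) = ⊥ :=
      LinearMap.ker_eq_bot.mpr (hinj x)
    have := LinearMap.bot_lt_ker_of_det_eq_zero hdet0
    rw [hker] at this
    exact lt_irrefl _ this
  -- smoothness of g
  have hgC : ∀ y, ContDiffAt ℝ (m + 1 : ℕ) g y := by
    intro y
    set a := g y with ha
    have hbij : Function.Bijective ((fderiv ℝ T a) : EuclideanSpace ℝ (Fin d) →ₗ[ℝ] EuclideanSpace ℝ (Fin d)) :=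
      ⟨hinj a, LinearMap.injective_iff_surjective.mp (hinj a)⟩
    let e' : EuclideanSpace ℝ (Fin d) ≃ₗ[ℝ] EuclideanSpace ℝ (Fin d) := LinearEquiv.ofBijective _ hbij
    let e : EuclideanSpace ℝ (Fin d) ≃L[ℝ] EuclideanSpace ℝ (Fin d) := e'.toContinuousLinearEquiv
    have he : (e : EuclideanSpace ℝ (Fin d) →L[ℝ] EuclideanSpace ℝ (Fin d)) = fderiv ℝ T a := by
      ext v
      simp [e, e']
    have hfd : HasFDerivAt T (e : EuclideanSpace ℝ (Fin d) →L[ℝ] EuclideanSpace ℝ (Fin d)) a := by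
      rw [he]; exact hfderT a
    have hTa : ContDiffAt ℝ (m + 1 : ℕ) T a := hTc.contDiffAt
    have hcd := hTa.to_localInverse (f' := e) hfd hone
    have hstrict : HasStrictFDerivAt T (e : EuclideanSpace ℝ (Fin d) →L[ℝ] EuclideanSpace ℝ (Fin d)) a := hTa.hasStrictFDerivAt' hfd hone
    have hev : ∀ᶠ z in nhds (T a), T (hTa.localInverse hfd hone z) = z :=
      hstrict.eventually_right_inverse
    have heq : g =ᶠ[nhds (T a)] hTa.localInverse hfd hone := by
      filter_upwards [hev] with z hz
      conv_lhs => rw [← hz]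
      rw [hg1]
    have : ContDiffAt ℝ (m + 1 : ℕ) g (T a) := hcd.congr_of_eventuallyEq heq
    rwa [hg2 y] at this
  have hg' : ContDiff ℝ (m + 1 : ℕ) g := contDiff_iff_contDiffAt.mpr hgC
  have hgm : ContDiff ℝ (m : ℕ) g := hg'.of_le (by exact_mod_cast Nat.le_succ m)
  -- smoothness of V₁
  have hBm : ContDiff ℝ (m : ℕ) (fderiv ℝ T) := hTc.fderiv_right (by norm_cast)
  have hdetC : ContDiff ℝ (m : ℕ) fun y => (fderiv ℝ T (g y)).det :=
    contDiff_clm_det.comp (hBm.comp hgm)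
  have hV₁C : ContDiff ℝ (m : ℕ) V₁ := by
    rw [hV₁]
    have h1 : ContDiff ℝ (m : ℕ) fun y => V (g y) :=
      (hV.of_le (by exact_mod_cast Nat.le_add_right m 2)).comp hgm
    have h2 : ContDiff ℝ (m : ℕ) fun y => Real.log ((fderiv ℝ T (g y)).det) := by
      refine contDiff_iff_contDiffAt.mpr fun y => ?_
      exact (Real.contDiffAt_log.mpr (hdet (g y))).comp y hdetC.contDiffAt
    exact h1.add h2
  refine ⟨hV₁C, ?_⟩
  -- measure part
  have hTmeas : Measurable T := hTc.continuous.measurable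
  have hBcont : Continuous fun x => (fderiv ℝ T x).det :=
    ContinuousLinearMap.continuous_det.comp hBm.continuous
  have hmeas_det : Measurable fun x => ENNReal.ofReal |(fderiv ℝ T x).det| :=
    (ENNReal.continuous_ofReal.comp hBcont.abs).measurable
  have hw : Measurable fun y => ENNReal.ofReal (Real.exp (-V₁ y)) :=
    (ENNReal.continuous_ofReal.comp (Real.continuous_exp.comp hV₁C.continuous.neg)).measurable
  have hwT : Measurable fun x => ENNReal.ofReal (Real.exp (-V₁ (T x))) := hw.comp hTmeas
  have map1 : Measure.map T (volume.withDensity fun x => ENNReal.ofReal |(fderiv ℝ T x).det|)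
      = (volume : Measure (EuclideanSpace ℝ (Fin d))) := by
    have hrange : T '' Set.univ = Set.univ := by
      rw [Set.image_univ]
      exact hg2.surjective.range_eq
    have := map_withDensity_abs_det_fderiv_eq_addHaar (volume : Measure (EuclideanSpace ℝ (Fin d))) MeasurableSet.univ.nullMeasurableSet
      (fun x _ => (hfderT x).hasFDerivWithinAt) (hg1.injective.injOn)
    simpa [hrange] using this
  have hdens : ∀ x, ENNReal.ofReal (Real.exp (-V x))
      = ENNReal.ofReal |(fderiv ℝ T x).det| * ENNReal.ofReal (Real.exp (-V₁ (T x))) := by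
    intro x
    have hxx : V₁ (T x) = V x + Real.log ((fderiv ℝ T x).det) := by
      rw [hV₁]
      simp [hg1 x]
    rw [← ENNReal.ofReal_mul (abs_nonneg _)]
    congr 1
    have habs : |(fderiv ℝ T x).det| ≠ 0 := abs_ne_zero.mpr (hdet x)
    rw [hxx, neg_add, Real.exp_add,
      show Real.exp (-Real.log ((fderiv ℝ T x).det)) = |(fderiv ℝ T x).det|⁻¹ by
        rw [Real.exp_neg, Real.exp_log_eq_abs (hdet x)]]
    field_simp
  calc Measure.map T (volume.withDensity fun x => ENNReal.ofReal (Real.exp (-V x)))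
      = Measure.map T ((volume.withDensity fun x => ENNReal.ofReal |(fderiv ℝ T x).det|).withDensity
          fun x => ENNReal.ofReal (Real.exp (-V₁ (T x)))) := by
        have hfg : (fun x => ENNReal.ofReal (Real.exp (-V x)))
            = (fun x => ENNReal.ofReal |(fderiv ℝ T x).det|)
              * fun x => ENNReal.ofReal (Real.exp (-V₁ (T x))) := by
          funext x
          exact hdens x
        rw [hfg, withDensity_mul _ hmeas_det hwT]
    _ = (Measure.map T (volume.withDensity fun x => ENNReal.ofReal |(fderiv ℝ T x).det|)).withDensity
          fun y => ENNReal.ofReal (Real.exp (-V₁ y)) :=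
        map_withDensity_comp _ hTmeas hw
    _ = volume.withDensity fun y => ENNReal.ofReal (Real.exp (-V₁ y)) := by rw [map1]
end
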